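/- arXiv:1212.4803 — 5 statements merged into one kernel-verified Lean document; each statement's English description precedes it below -/
import Mathlib

section
/- The singular points of the vector field Ψ ↦ A(ΨΛΨ⁻¹)Ψ on SO(n,ℝ) (with Λ diagonal with distinct entries) form exactly 2^(n-1) · n! points, namely the signed permutation matrices of determinant 1. -/
open Matrix

/-- The antisymmetrization `A(L) = L₊ - L₋` of a matrix. -/
def antisymmetrize {n : ℕ} (L : Matrix (Fin n) (Fin n) ℝ) : Matrix (Fin n) (Fin n) ℝ :=
  Matrix.of fun i j => if i < j then L i j else if j < i then -(L i j) else 0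

/-!
As `Ψ` is invertible, `A(ΨΛΨᵀ)Ψ = 0` forces `A(ΨΛΨᵀ) = 0`, i.e. `ΨΛΨᵀ = D` is diagonal, so
`ΨΛ = DΨ`. Entrywise `Ψᵢⱼ (λⱼ - Dᵢ) = 0`, and since the `λⱼ` are distinct each row of `Ψ` has at
most one nonzero entry; orthogonality then makes `Ψ` a signed permutation matrix. Conversely a
signed permutation matrix conjugates `Λ` to a diagonal matrix.

Signed permutation matrices correspond bijectively to pairs `(σ, ε) ∈ Sₙ × {±1}ⁿ`, and the
determinant `sign σ · ∏ εᵢ` is a surjective homomorphism onto `{±1}`; its kernel is half of the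
`2ⁿ n!` pairs.
-/

open Equiv Function

namespace Matrix

variable {ι R : Type*} [DecidableEq ι]

theorem permMatrix_eq_of [Zero R] [One R] (σ : Perm ι) :
    σ.permMatrix R = of fun i j => if σ i = j then 1 else 0 := by
  ext i j
  simp [eq_comm]

section CommRing

variable [Fintype ι] [CommRing R]

def signedPermMatrix (σ : Perm ι) (d : ι → R) : Matrix ι ι R :=
  σ.permMatrix R * diagonal d

theorem signedPermMatrix_apply (σ : Perm ι) (d : ι → R) (i j : ι) :
    signedPermMatrix σ d i j = if σ i = j then d j else 0 := by
  simp [signedPermMatrix, permMatrix_eq_of, mul_diagonal]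

theorem det_signedPermMatrix (σ : Perm ι) (d : ι → R) :
    (signedPermMatrix σ d).det = Perm.sign σ * ∏ i, d i := by
  rw [signedPermMatrix, det_mul, det_permutation, det_diagonal]

theorem signedPermMatrix_mul_transpose {σ : Perm ι} {d : ι → R} (hd : ∀ i, d i * d i = 1) :
    signedPermMatrix σ d * (signedPermMatrix σ d)ᵀ = 1 := by
  have hdd : diagonal d * diagonal d = 1 := by
    rw [diagonal_mul_diagonal, ← diagonal_one]; exact congrArg diagonal (funext hd)
  rw [signedPermMatrix, transpose_mul, diagonal_transpose, mul_assoc, ← mul_assoc (diagonal d),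
    hdd, one_mul, transpose_permMatrix, ← permMatrix_mul, inv_mul_cancel, permMatrix_one]

theorem isDiag_signedPermMatrix_mul_diagonal_mul_transpose (σ : Perm ι) (d lam : ι → R) :
    (signedPermMatrix σ d * diagonal lam * (signedPermMatrix σ d)ᵀ).IsDiag := by
  rw [signedPermMatrix, transpose_mul, transpose_permMatrix, mul_assoc, mul_assoc,
    PEquiv.toMatrix_toPEquiv_mul, ← mul_assoc, ← mul_assoc, PEquiv.mul_toMatrix_toPEquiv,
    submatrix_submatrix, Perm.inv_def, symm_symm, comp_id, id_comp, diagonal_transpose,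
    diagonal_mul_diagonal, diagonal_mul_diagonal]
  exact (isDiag_diagonal _).submatrix σ.injective

theorem eq_and_eq_of_signedPermMatrix_eq {σ σ' : Perm ι} {d d' : ι → R} (hd : ∀ i, d i ≠ 0)
    (h : signedPermMatrix σ d = signedPermMatrix σ' d') : σ = σ' ∧ d = d' := by
  have hentry := fun i j => congrFun (congrFun h i) j
  simp only [signedPermMatrix_apply] at hentry
  obtain rfl : σ = σ' := Equiv.ext fun i => by
    by_contra hne
    simpa [Ne.symm hne, hd] using hentry i (σ i)
  exact ⟨rfl, funext fun j => by simpa using hentry (σ.symm j) j⟩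

theorem eq_of_ne_zero_of_mul_diagonal_eq_diagonal_mul [NoZeroDivisors R] {Ψ : Matrix ι ι R}
    {lam μ : ι → R} (hlam : Injective lam) (h : Ψ * diagonal lam = diagonal μ * Ψ) {i j j' : ι}
    (hj : Ψ i j ≠ 0) (hj' : Ψ i j' ≠ 0) : j = j' := by
  have hrow : ∀ k, Ψ i k ≠ 0 → lam k = μ i := fun k hk => by
    have := congrFun (congrFun h i) k
    rw [mul_diagonal, diagonal_mul, mul_comm] at this
    exact mul_right_cancel₀ hk this
  exact hlam ((hrow j hj).trans (hrow j' hj').symm)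

theorem exists_signedPermMatrix_of_mul_transpose_eq_one [IsDomain R] {Ψ : Matrix ι ι R}
    (hΨ : Ψ * Ψᵀ = 1) (hrow : ∀ i j j', Ψ i j ≠ 0 → Ψ i j' ≠ 0 → j = j') :
    ∃ (σ : Perm ι) (d : ι → R), (∀ i, d i = 1 ∨ d i = -1) ∧ Ψ = signedPermMatrix σ d := by
  have horth : ∀ i k, ∑ j, Ψ i j * Ψ k j = if i = k then 1 else 0 := fun i k => by
    simpa [mul_apply, one_apply] using congrFun (congrFun hΨ i) k
  have hnz : ∀ i, ∃ j, Ψ i j ≠ 0 := fun i => by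
    by_contra! h
    simpa [h] using horth i i
  choose τ hτ using hnz
  have hsupp : ∀ i j, j ≠ τ i → Ψ i j = 0 := fun i j hj => by
    by_contra h
    exact hj (hrow i j (τ i) h (hτ i))
  have hdot : ∀ i k, ∑ j, Ψ i j * Ψ k j = Ψ i (τ i) * Ψ k (τ i) := fun i k =>
    Finset.sum_eq_single (τ i) (fun j _ hj => by rw [hsupp i j hj, zero_mul]) (by simp)
  have hτinj : Injective τ := fun i k hik => by
    by_contra hne
    have := horth i k
    rw [hdot, if_neg hne, hik] at this
    exact mul_ne_zero (hik ▸ hτ i) (hτ k) this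
  let σ : Perm ι := Equiv.ofBijective τ hτinj.bijective_of_finite
  refine ⟨σ, fun j => Ψ (σ.symm j) j, fun j => mul_self_eq_one_iff.mp ?_, ?_⟩
  · have := horth (σ.symm j) (σ.symm j)
    rwa [hdot, if_pos rfl, show τ (σ.symm j) = j from σ.apply_symm_apply j] at this
  · ext i j
    rw [signedPermMatrix_apply]
    split_ifs with h
    · rw [← h, σ.symm_apply_apply]
    · exact hsupp i j (Ne.symm h)

end CommRing

section Count

variable [Fintype ι]

def signedPermDet : Perm ι × (ι → ℤˣ) →* ℤˣ :=
  MonoidHom.mk' (fun p => Perm.sign p.1 * ∏ i, p.2 i) fun p q => by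
    simp only [Prod.fst_mul, Prod.snd_mul, map_mul, Pi.mul_apply, Finset.prod_mul_distrib]
    exact mul_mul_mul_comm _ _ _ _

theorem signedPermDet_surjective [Nonempty ι] : Surjective (signedPermDet (ι := ι)) := by
  inhabit ι
  intro u
  refine ⟨(1, Pi.mulSingle default u), ?_⟩
  simp [signedPermDet, Finset.prod_pi_mulSingle']

theorem card_ker_signedPermDet [Nonempty ι] :
    Nat.card (signedPermDet (ι := ι)).ker
      = 2 ^ (Fintype.card ι - 1) * (Fintype.card ι).factorial := by
  have h := (signedPermDet (ι := ι)).ker.card_mul_index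
  rw [Subgroup.index_ker, MonoidHom.range_eq_top.mpr signedPermDet_surjective,
    Subgroup.card_top, Nat.card_prod, Nat.card_perm, Nat.card_fun] at h
  simp only [Nat.card_eq_fintype_card, Fintype.card_units_int] at h ⊢
  obtain ⟨m, hm⟩ := Nat.exists_eq_add_one_of_ne_zero (Fintype.card_ne_zero (α := ι))
  rw [hm, pow_succ] at h
  rw [hm, Nat.add_sub_cancel]
  linarith

theorem det_signedPermMatrix_units [CommRing R] (p : Perm ι × (ι → ℤˣ)) :
    (signedPermMatrix p.1 fun i => ((p.2 i : ℤ) : R)).det = ((signedPermDet p : ℤ) : R) := by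
  simp [det_signedPermMatrix, signedPermDet]

theorem ncard_signedPermMatrix_det_eq_one [CommRing R] [CharZero R] [Nonempty ι] :
    {Ψ : Matrix ι ι R | ∃ (σ : Perm ι) (d : ι → R),
        (∀ i, d i = 1 ∨ d i = -1) ∧ Ψ = signedPermMatrix σ d ∧ Ψ.det = 1}.ncard
      = 2 ^ (Fintype.card ι - 1) * (Fintype.card ι).factorial := by
  let f : Perm ι × (ι → ℤˣ) → Matrix ι ι R := fun p =>
    signedPermMatrix p.1 fun i => ((p.2 i : ℤ) : R)
  have hcast : ∀ u : ℤˣ, ((u : ℤ) : R) = 1 ∨ ((u : ℤ) : R) = -1 := fun u => by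
    rcases Int.units_eq_one_or u with rfl | rfl <;> simp
  have hf : Injective f := fun p q h => by
    obtain ⟨hσ, hd⟩ := eq_and_eq_of_signedPermMatrix_eq
      (fun i => by rcases hcast (p.2 i) with h | h <;> simp [h]) h
    refine Prod.ext hσ (funext fun i => Units.ext ?_)
    exact_mod_cast congrFun hd i
  have hdet : ∀ p, (f p).det = 1 ↔ signedPermDet p = 1 := fun p => by
    rw [det_signedPermMatrix_units, ← Int.cast_one, Int.cast_inj, ← Units.val_one, Units.val_inj]
  have himage : {Ψ : Matrix ι ι R | ∃ (σ : Perm ι) (d : ι → R),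
      (∀ i, d i = 1 ∨ d i = -1) ∧ Ψ = signedPermMatrix σ d ∧ Ψ.det = 1}
      = f '' ((signedPermDet (ι := ι)).ker : Set (Perm ι × (ι → ℤˣ))) := by
    ext Ψ
    constructor
    · rintro ⟨σ, d, hd, rfl, hΨ⟩
      have hunit : ∀ i, ∃ u : ℤˣ, ((u : ℤ) : R) = d i := fun i => by
        rcases hd i with h | h
        exacts [⟨1, by simp [h]⟩, ⟨-1, by simp [h]⟩]
      choose u hu using hunit
      have hfu : f (σ, u) = signedPermMatrix σ d := by simp only [f, hu]
      exact ⟨(σ, u), (hdet _).mp (hfu ▸ hΨ), hfu⟩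
    · rintro ⟨p, hp, rfl⟩
      exact ⟨p.1, _, fun i => hcast (p.2 i), rfl, (hdet p).mpr hp⟩
  rw [himage, Set.ncard_image_of_injective _ hf, ← card_ker_signedPermDet]
  rfl

end Count

end Matrix

theorem antisymmetrize_eq_zero_iff {n : ℕ} {L : Matrix (Fin n) (Fin n) ℝ} :
    antisymmetrize L = 0 ↔ L.IsDiag := by
  refine ⟨fun h i j hij => ?_, fun h => ?_⟩
  · have := congrFun (congrFun h i) j
    simp only [antisymmetrize, of_apply, Matrix.zero_apply] at this
    rcases hij.lt_or_gt with hlt | hgt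
    · simpa [hlt] using this
    · simpa [hgt, hgt.not_gt] using this
  · ext i j
    simp only [antisymmetrize, of_apply, Matrix.zero_apply]
    split_ifs with hlt hgt
    · exact h hlt.ne
    · rw [h hgt.ne', neg_zero]
    · rfl

theorem mul_transpose_eq_one_and_antisymmetrize_mul_eq_zero_iff {n : ℕ} {lam : Fin n → ℝ}
    (hlam : Injective lam) {Ψ : Matrix (Fin n) (Fin n) ℝ} :
    (Ψ * Ψᵀ = 1 ∧ antisymmetrize (Ψ * diagonal lam * Ψᵀ) * Ψ = 0) ↔
      ∃ (σ : Perm (Fin n)) (d : Fin n → ℝ),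
        (∀ i, d i = 1 ∨ d i = -1) ∧ Ψ = signedPermMatrix σ d := by
  constructor
  · rintro ⟨hΨ, hA⟩
    have hdiag : (Ψ * diagonal lam * Ψᵀ).IsDiag := by
      rw [← antisymmetrize_eq_zero_iff]
      calc antisymmetrize (Ψ * diagonal lam * Ψᵀ)
          = antisymmetrize (Ψ * diagonal lam * Ψᵀ) * Ψ * Ψᵀ := by rw [mul_assoc _ Ψ, hΨ, mul_one]
        _ = 0 := by rw [hA, zero_mul]
    have hcomm : Ψ * diagonal lam = diagonal (diag (Ψ * diagonal lam * Ψᵀ)) * Ψ := by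
      rw [hdiag.diagonal_diag, mul_assoc _ Ψᵀ, mul_eq_one_comm.mp hΨ, mul_one]
    exact exists_signedPermMatrix_of_mul_transpose_eq_one hΨ fun i j j' =>
      eq_of_ne_zero_of_mul_diagonal_eq_diagonal_mul hlam hcomm
  · rintro ⟨σ, d, hd, rfl⟩
    refine ⟨signedPermMatrix_mul_transpose fun i => mul_self_eq_one_iff.mpr (hd i), ?_⟩
    rw [antisymmetrize_eq_zero_iff.mpr
      (isDiag_signedPermMatrix_mul_diagonal_mul_transpose σ d lam), zero_mul]

/-- The singular points of the vector field `Ψ ↦ -A(ΨΛΨ⁻¹)Ψ` on `SO(n,ℝ)` (with `Λ`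
diagonal with distinct entries) are exactly the signed permutation matrices of
determinant `1`, and there are exactly `2^(n-1) · n!` of them. -/
theorem toda_singular_points {n : ℕ} (hn : 1 ≤ n) (lam : Fin n → ℝ)
    (hlam : Function.Injective lam) :
    ({Ψ : Matrix (Fin n) (Fin n) ℝ |
        Ψ * Ψᵀ = 1 ∧ Ψ.det = 1 ∧ antisymmetrize (Ψ * Matrix.diagonal lam * Ψᵀ) * Ψ = 0}
      = {Ψ : Matrix (Fin n) (Fin n) ℝ |
        ∃ (σ : Equiv.Perm (Fin n)) (d : Fin n → ℝ),
          (∀ i, d i = 1 ∨ d i = -1) ∧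
          Ψ = (Matrix.of fun i j => if σ i = j then (1 : ℝ) else 0) * Matrix.diagonal d ∧
          Ψ.det = 1}) ∧
    ({Ψ : Matrix (Fin n) (Fin n) ℝ |
        Ψ * Ψᵀ = 1 ∧ Ψ.det = 1 ∧ antisymmetrize (Ψ * Matrix.diagonal lam * Ψᵀ) * Ψ = 0}.ncard
      = 2 ^ (n - 1) * n.factorial) := by
  have hset : {Ψ : Matrix (Fin n) (Fin n) ℝ |
        Ψ * Ψᵀ = 1 ∧ Ψ.det = 1 ∧ antisymmetrize (Ψ * Matrix.diagonal lam * Ψᵀ) * Ψ = 0}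
      = {Ψ : Matrix (Fin n) (Fin n) ℝ | ∃ (σ : Equiv.Perm (Fin n)) (d : Fin n → ℝ),
          (∀ i, d i = 1 ∨ d i = -1) ∧ Ψ = signedPermMatrix σ d ∧ Ψ.det = 1} := by
    ext Ψ
    have hiff := mul_transpose_eq_one_and_antisymmetrize_mul_eq_zero_iff hlam (Ψ := Ψ)
    constructor
    · rintro ⟨hΨ, hdet, hA⟩
      obtain ⟨σ, d, hd, rfl⟩ := hiff.mp ⟨hΨ, hA⟩
      exact ⟨σ, d, hd, rfl, hdet⟩
    · rintro ⟨σ, d, hd, rfl, hdet⟩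
      exact ⟨(hiff.mpr ⟨σ, d, hd, rfl⟩).1, hdet, (hiff.mpr ⟨σ, d, hd, rfl⟩).2⟩
  have : Nonempty (Fin n) := ⟨⟨0, hn⟩⟩
  refine ⟨?_, ?_⟩
  · rw [hset]
    simp only [signedPermMatrix, permMatrix_eq_of]
  · rw [hset, ncard_signedPermMatrix_det_eq_one, Fintype.card_fin]
end

section
/- Let w be a signed permutation matrix in O(n,ℝ) corresponding to permutation σ ∈ Sₙ, let Λ = diag(λ₁,...,λₙ), and N = diag(0,1,...,n-1). Then the second-order term of the function F(Ψ) = Tr(ΨΛΨ⁻¹N) at Ψ = (I + Θ + Θ²/2)w, for Θ antisymmetric with entries θᵢⱼ (i<j), equals Σ_{i<j} θᵢⱼ² (λ_{σ(i)} - λ_{σ(j)})(j - i). -/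
open Matrix

/-- The second-order term of `F(Ψ) = Tr(ΨΛΨ⁻¹N)` at a signed permutation matrix `w`
corresponding to `σ ∈ Sₙ`, along `Ψ = (I + Θ + Θ²/2)w` with `Θ` antisymmetric, equals
`Σ_{i<j} θᵢⱼ² (λ_{σ(i)} - λ_{σ(j)})(j - i)`. -/
theorem hessian_of_toda_morse_function {n : ℕ} (lam : Fin n → ℝ)
    (σ : Equiv.Perm (Fin n)) (ε : Fin n → ℝ) (hε : ∀ i, ε i = 1 ∨ ε i = -1)
    (w : Matrix (Fin n) (Fin n) ℝ)
    (hw : ∀ i j, w i j = ε i * (if j = σ i then 1 else 0))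
    (Θ : Matrix (Fin n) (Fin n) ℝ) (hΘ : Θᵀ = -Θ) :
    Matrix.trace
      ((-(Θ * (w * Matrix.diagonal lam * wᵀ) * Θ)
          + (1/2 : ℝ) • (Θ^2 * (w * Matrix.diagonal lam * wᵀ)
              + (w * Matrix.diagonal lam * wᵀ) * Θ^2))
        * Matrix.diagonal (fun i : Fin n => (i : ℝ)))
      = ∑ i : Fin n, ∑ j : Fin n,
          if i < j then (Θ i j)^2 * (lam (σ i) - lam (σ j)) * ((j : ℝ) - (i : ℝ)) else 0 := by
  -- Step 1: the conjugated diagonal matrix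
  have hD : w * Matrix.diagonal lam * wᵀ = Matrix.diagonal (fun i => lam (σ i)) := by
    ext i k
    have hε2 : ε i * ε i = 1 := by rcases hε i with h | h <;> rw [h] <;> ring
    simp only [Matrix.mul_apply, Matrix.mul_diagonal, Matrix.transpose_apply, hw,
      Matrix.diagonal_apply]
    simp only [mul_ite, mul_one, mul_zero, ite_mul, zero_mul,
      Finset.sum_ite_eq', Finset.mem_univ, if_true]
    by_cases h : σ i = σ k
    · have : i = k := σ.injective h
      subst this
      simp [h, mul_comm, ← mul_assoc, hε2]
    · have : ¬ i = k := fun e => h (by rw [e])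
      simp [h, this, Ne.symm h]
  rw [hD]
  set μ : Fin n → ℝ := fun i => lam (σ i) with hμ
  have hskew : ∀ i j, Θ j i = -Θ i j := by
    intro i j
    have := congrFun (congrFun hΘ i) j
    simpa [Matrix.transpose_apply] using this
  have hΘ2 : ∀ i j, (Θ j i)^2 = (Θ i j)^2 := by intro i j; rw [hskew]; ring
  set g : Fin n → Fin n → ℝ :=
    fun i j => (Θ i j)^2 * (μ i - μ j) * ((j : ℝ) - (i : ℝ)) with hg
  have hgsymm : ∀ i j, g j i = g i j := by
    intro i j; simp only [hg, hΘ2]; ring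
  -- Step 2: compute the trace as a double sum
  have htr : Matrix.trace
      ((-(Θ * Matrix.diagonal μ * Θ)
          + (1/2 : ℝ) • (Θ^2 * Matrix.diagonal μ + Matrix.diagonal μ * Θ^2))
        * Matrix.diagonal (fun i : Fin n => (i : ℝ)))
      = ∑ i : Fin n, ∑ k : Fin n, (Θ i k)^2 * (μ k - μ i) * (i : ℝ) := by
    have h1 : ∀ i, (Θ * Matrix.diagonal μ * Θ) i i = ∑ k, Θ i k * μ k * Θ k i := by
      intro i; simp [Matrix.mul_apply, Matrix.diagonal_apply, mul_ite, ite_mul, mul_zero,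
        zero_mul, Finset.sum_ite_eq', Finset.sum_ite_eq]
    have h2 : ∀ i, (Θ^2 * Matrix.diagonal μ) i i = (∑ k, Θ i k * Θ k i) * μ i := by
      intro i; simp [pow_two, Matrix.mul_apply, Matrix.diagonal_apply, mul_ite, ite_mul,
        mul_zero, zero_mul, Finset.sum_ite_eq', Finset.sum_ite_eq, Finset.mul_sum]
    have h3 : ∀ i, (Matrix.diagonal μ * Θ^2) i i = μ i * (∑ k, Θ i k * Θ k i) := by
      intro i; simp [pow_two, Matrix.mul_apply, Matrix.diagonal_apply, mul_ite, ite_mul,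
        mul_zero, zero_mul, Finset.sum_ite_eq', Finset.sum_ite_eq, Finset.mul_sum]
    rw [Matrix.trace]
    rw [Finset.sum_congr rfl]
    intro i _
    simp only [Matrix.diag_apply, Matrix.mul_diagonal, Matrix.add_apply,
      Matrix.neg_apply, Matrix.smul_apply, smul_eq_mul, h1 i, h2 i, h3 i]
    have e1 : ∑ k, Θ i k * μ k * Θ k i = -∑ k, (Θ i k)^2 * μ k := by
      rw [← Finset.sum_neg_distrib]
      exact Finset.sum_congr rfl fun k _ => by rw [hskew i k]; ring
    have e2 : (∑ k, Θ i k * Θ k i) = -∑ k, (Θ i k)^2 := by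
      rw [← Finset.sum_neg_distrib]
      exact Finset.sum_congr rfl fun k _ => by rw [hskew i k]; ring
    rw [e1, e2]
    have e3 : ∑ k, (Θ i k)^2 * (μ k - μ i) * (i : ℝ)
        = (∑ k, (Θ i k)^2 * μ k) * i - (∑ k, (Θ i k)^2) * (μ i * i) := by
      rw [Finset.sum_mul, Finset.sum_mul, ← Finset.sum_sub_distrib]
      exact Finset.sum_congr rfl fun k _ => by ring
    rw [e3]; ring
  rw [htr]
  -- Step 3: symmetrization over pairs
  set S := ∑ i : Fin n, ∑ k : Fin n, (Θ i k)^2 * (μ k - μ i) * (i : ℝ) with hS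
  set R := ∑ i : Fin n, ∑ k : Fin n, (if i < k then g i k else 0) with hR
  have hS2 : S = ∑ i : Fin n, ∑ k : Fin n, (Θ i k)^2 * (μ i - μ k) * (k : ℝ) := by
    rw [hS, Finset.sum_comm]
    exact Finset.sum_congr rfl fun i _ => Finset.sum_congr rfl fun k _ => by
      rw [hΘ2]
  have hR2 : R = ∑ i : Fin n, ∑ k : Fin n, (if k < i then g i k else 0) := by
    rw [hR, Finset.sum_comm]
    exact Finset.sum_congr rfl fun i _ => Finset.sum_congr rfl fun k _ => by
      rw [hgsymm]
  have key : S + S = R + R := by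
    nth_rewrite 1 [hS2]
    nth_rewrite 2 [hR2]
    rw [hS, hR]
    rw [← Finset.sum_add_distrib, ← Finset.sum_add_distrib]
    refine Finset.sum_congr rfl fun i _ => ?_
    rw [← Finset.sum_add_distrib, ← Finset.sum_add_distrib]
    refine Finset.sum_congr rfl fun k _ => ?_
    rcases lt_trichotomy i k with h | h | h
    · rw [if_pos h, if_neg (not_lt.mpr h.le)]
      simp only [hg]; ring
    · subst h
      simp [hg]
    · rw [if_neg (not_lt.mpr h.le), if_pos h]
      simp only [hg]; ring
  have : S = R := by linarith
  exact this
end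

section
/- For w, v ∈ Sₙ, v ≤ w in the Bruhat order if and only if r_v(p,q) ≥ r_w(p,q) for all 1 ≤ p,q ≤ n, where r_u(p,q) = #{i ≤ p : u(i) ≤ q}. -/
/-- The inversion length of a permutation of `Fin n`. -/
def invLen {n : ℕ} (σ : Equiv.Perm (Fin n)) : ℕ :=
  (Finset.univ.filter fun p : Fin n × Fin n => p.1 < p.2 ∧ σ p.2 < σ p.1).card

/-- The Bruhat order on `Sₙ`: the reflexive-transitive closure of the relations
`x < t·x` for transpositions `t` with `l(t·x) = l(x) + 1`. -/
def bruhatLE {n : ℕ} : Equiv.Perm (Fin n) → Equiv.Perm (Fin n) → Prop :=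
  Relation.ReflTransGen fun x y =>
    (∃ i j : Fin n, i ≠ j ∧ y = Equiv.swap i j * x) ∧ invLen y = invLen x + 1

/-- The rank function `r_u(p,q) = #{i ≤ p : u(i) ≤ q}` of the permutation matrix of `u`
(rows and columns counted from `1`, i.e. `i : Fin n` contributes when `i < p`). -/
def rankFn {n : ℕ} (u : Equiv.Perm (Fin n)) (p q : ℕ) : ℕ :=
  (Finset.univ.filter fun i : Fin n => (i : ℕ) < p ∧ ((u i : Fin n) : ℕ) < q).card

/-
Right multiplication of `x` by the transposition of positions `i < j` with `x i < x j` lowers the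
rank function by one exactly on the rectangle `i < p ≤ j`, `x i < q ≤ x j`, and raises the length
by `1 + 2m`, where `m` counts the `k ∈ (i, j)` with `x k ∈ (x i, x j)`. In particular a Bruhat step
can only swap an increasing pair of values, which gives the forward direction.

Conversely, let `r_w ≤ r_v` with `v ≠ w`, and let `i` be the first position where they differ.
Comparing ranks in row `i` gives `v i < w i`; for the first `j > i` with `v i < v j ≤ w i`, the
product `v * (i j)` is a Bruhat cover of `v` (`m = 0`), and its rank function still dominates `r_w`
because `r_w < r_v` on the rectangle. Induction on `n² - ℓ(v)` concludes.
-/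

open Equiv Finset

theorem sum_eq_pair_add_compl {α M : Type*} [Fintype α] [DecidableEq α] [AddCommMonoid M]
    {i j : α} (hij : i ≠ j) (f : α → M) :
    ∑ k, f k = f i + f j + ∑ k ∈ {i, j}ᶜ, f k := by
  rw [← sum_add_sum_compl {i, j}, sum_pair hij]

theorem sum_sum_eq_pair_add_compl {α M : Type*} [Fintype α] [DecidableEq α] [AddCommMonoid M]
    {i j : α} (hij : i ≠ j) (F : α → α → M) :
    ∑ p, ∑ q, F p q = F i i + F i j + F j i + F j j
      + ∑ k ∈ {i, j}ᶜ, (F i k + F j k + F k i + F k j)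
      + ∑ p ∈ {i, j}ᶜ, ∑ q ∈ {i, j}ᶜ, F p q := by
  simp only [sum_eq_pair_add_compl hij, sum_add_distrib]
  abel

theorem exists_ne_forall_lt_eq {α β : Type*} [LinearOrder α] [WellFoundedLT α] {f g : α → β}
    (hfg : f ≠ g) : ∃ i, f i ≠ g i ∧ ∀ k < i, f k = g k := by
  obtain ⟨i, hi, hmin⟩ := wellFounded_lt.has_min {i | f i ≠ g i} (Function.ne_iff.mp hfg)
  exact ⟨i, hi, fun k hk => not_not.mp fun h => hmin k h hk⟩

variable {n : ℕ}

lemma invLen_eq_sum (u : Perm (Fin n)) :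
    invLen u = ∑ p, ∑ q, if p < q ∧ u q < u p then 1 else 0 := by
  rw [invLen, card_filter, Fintype.sum_prod_type]

lemma invLen_le (u : Perm (Fin n)) : invLen u ≤ n * n :=
  (card_filter_le _ _).trans (by simp)

lemma rankFn_eq_sum (u : Perm (Fin n)) (p q : ℕ) :
    rankFn u p q = ∑ k : Fin n, if (k : ℕ) < p ∧ (u k : ℕ) < q then 1 else 0 :=
  card_filter _ _

lemma rankFn_min (u : Perm (Fin n)) (p q : ℕ) : rankFn u p q = rankFn u (min p n) (min q n) := by
  unfold rankFn
  congr 1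
  refine filter_congr fun k _ => ?_
  omega

lemma rankFn_succ (u : Perm (Fin n)) (k : Fin n) (q : ℕ) :
    rankFn u (k + 1) q = rankFn u k q + if (u k : ℕ) < q then 1 else 0 := by
  rw [rankFn_eq_sum, rankFn_eq_sum, ← add_sum_erase _ _ (mem_univ k),
    ← add_sum_erase _ _ (mem_univ k), sum_congr rfl fun l hl => ?_]
  · simp only [lt_add_one, lt_irrefl, true_and, false_and, ↓reduceIte]
    ring
  · have : (l : ℕ) ≠ k := Fin.val_ne_of_ne (ne_of_mem_erase hl)
    exact if_congr (by omega) rfl rfl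

lemma rankFn_congr {v w : Perm (Fin n)} {p : ℕ} (h : ∀ k : Fin n, (k : ℕ) < p → v k = w k)
    (q : ℕ) : rankFn v p q = rankFn w p q := by
  unfold rankFn
  congr 1
  exact filter_congr fun k _ => and_congr_right fun hk => by rw [h k hk]

lemma rankFn_add_card_strip (u : Perm (Fin n)) (p : ℕ) {q q' : ℕ} (hq : q ≤ q') :
    rankFn u p q + #{k : Fin n | (k : ℕ) < p ∧ q ≤ u k ∧ (u k : ℕ) < q'} = rankFn u p q' := by
  rw [rankFn, rankFn, ← card_union_of_disjoint (disjoint_filter.mpr fun k _ h1 h2 => by omega)]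
  congr 1
  ext k
  simp only [mem_union, mem_filter, mem_univ, true_and]
  omega

lemma mul_swap_apply_of_mem_compl {x : Perm (Fin n)} {i j k : Fin n}
    (hk : k ∈ ({i, j}ᶜ : Finset (Fin n))) : (x * swap i j) k = x k := by
  simp only [mem_compl, mem_insert, mem_singleton, not_or] at hk
  simp [swap_apply_of_ne_of_ne hk.1 hk.2]

lemma invLen_mul_swap {x : Perm (Fin n)} {i j : Fin n} (hij : i < j) (hx : x i < x j) :
    invLen (x * swap i j) = invLen x + 1 + 2 * #{k | i < k ∧ k < j ∧ x i < x k ∧ x k < x j} := by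
  set P : Fin n → Prop := fun k => i < k ∧ k < j ∧ x i < x k ∧ x k < x j
  have hne : i ≠ j := hij.ne
  have hmixed : ∀ k ∈ ({i, j}ᶜ : Finset (Fin n)),
      let F : Fin n → Fin n → ℕ := fun p q =>
        if p < q ∧ (x * swap i j) q < (x * swap i j) p then 1 else 0
      let G : Fin n → Fin n → ℕ := fun p q => if p < q ∧ x q < x p then 1 else 0
      F i k + F j k + F k i + F k j = G i k + G j k + G k i + G k j + 2 * if P k then 1 else 0 := by
    intro k hk
    have hxk := mul_swap_apply_of_mem_compl (x := x) hk
    simp only [mem_compl, mem_insert, mem_singleton, not_or] at hk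
    have hki : x k ≠ x i := x.injective.ne hk.1
    have hkj : x k ≠ x j := x.injective.ne hk.2
    simp only [hxk, Perm.mul_apply, swap_apply_left, swap_apply_right, P]
    split_ifs <;> omega
  have hcount : #{k | P k} = ∑ k ∈ ({i, j}ᶜ : Finset (Fin n)), if P k then 1 else 0 := by
    rw [card_filter, sum_eq_pair_add_compl hne]
    simp [P]
  rw [invLen_eq_sum, invLen_eq_sum, sum_sum_eq_pair_add_compl hne, sum_sum_eq_pair_add_compl hne,
    sum_congr rfl hmixed, hcount, sum_add_distrib, ← mul_sum,
    sum_congr rfl fun p hp => sum_congr rfl fun q hq => by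
      rw [mul_swap_apply_of_mem_compl hp, mul_swap_apply_of_mem_compl hq]]
  simp only [Perm.mul_apply, swap_apply_left, swap_apply_right, lt_irrefl, hij, hij.not_gt, hx,
    hx.not_gt, true_and, and_false, false_and, ↓reduceIte]
  ring

lemma apply_lt_apply_of_invLen_mul_swap {x : Perm (Fin n)} {i j : Fin n} (hij : i < j)
    (hlen : invLen (x * swap i j) = invLen x + 1) : x i < x j := by
  by_contra hji
  have hlt : (x * swap i j) i < (x * swap i j) j := by
    simpa using lt_of_le_of_ne (not_lt.mp hji) (x.injective.ne hij.ne')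
  have := invLen_mul_swap hij hlt
  rw [mul_swap_mul_self] at this
  omega

lemma rankFn_mul_swap {x : Perm (Fin n)} {i j : Fin n} (hij : i < j) (hx : x i < x j) (p q : ℕ) :
    rankFn (x * swap i j) p q
      + (if (i : ℕ) < p ∧ p ≤ j ∧ (x i : ℕ) < q ∧ q ≤ x j then 1 else 0) = rankFn x p q := by
  rw [rankFn_eq_sum, rankFn_eq_sum, sum_eq_pair_add_compl hij.ne, sum_eq_pair_add_compl hij.ne,
    sum_congr rfl fun k hk => by rw [mul_swap_apply_of_mem_compl hk]]
  simp only [Perm.mul_apply, swap_apply_left, swap_apply_right]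
  split_ifs <;> omega

lemma rankFn_mul_swap_le {x : Perm (Fin n)} {i j : Fin n} (hij : i < j)
    (hlen : invLen (x * swap i j) = invLen x + 1) (p q : ℕ) :
    rankFn (x * swap i j) p q ≤ rankFn x p q := by
  have := rankFn_mul_swap hij (apply_lt_apply_of_invLen_mul_swap hij hlen) p q
  omega

lemma exists_swap_mul_iff {x y : Perm (Fin n)} :
    (∃ c d : Fin n, c ≠ d ∧ y = swap c d * x) ↔ ∃ i j : Fin n, i < j ∧ y = x * swap i j := by
  constructor
  · rintro ⟨c, d, hcd, rfl⟩
    rw [swap_mul_eq_mul_swap]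
    rcases (x⁻¹.injective.ne hcd).lt_or_gt with h | h
    · exact ⟨_, _, h, rfl⟩
    · exact ⟨_, _, h, by rw [swap_comm]⟩
  · rintro ⟨i, j, hij, rfl⟩
    exact ⟨x i, x j, x.injective.ne hij.ne, mul_swap_eq_swap_mul x i j⟩

/-- The strip of rows `< p` and columns `[q, w i]` of `v` lies in that of `w`, which also contains
row `i`; dominance at column `w i + 1` then forces `r_w(p, q) < r_v(p, q)`. -/
lemma rankFn_lt_of_forall_lt_eq {v w : Perm (Fin n)} {i : Fin n} {p q : ℕ}
    (hdom : ∀ p q, rankFn w p q ≤ rankFn v p q) (hlow : ∀ k < i, v k = w k)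
    (hgap : ∀ k : Fin n, i < k → (k : ℕ) < p → v i < v k → w i < v k)
    (hip : (i : ℕ) < p) (hvq : (v i : ℕ) < q) (hqw : q ≤ w i) :
    rankFn w p q < rankFn v p q := by
  have hv := rankFn_add_card_strip v p (q := q) (q' := w i + 1) (by omega)
  have hw := rankFn_add_card_strip w p (q := q) (q' := w i + 1) (by omega)
  set Sv := ({k | (k : ℕ) < p ∧ q ≤ v k ∧ (v k : ℕ) < w i + 1} : Finset (Fin n))
  set Sw := ({k | (k : ℕ) < p ∧ q ≤ w k ∧ (w k : ℕ) < w i + 1} : Finset (Fin n))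
  have hsub : Sv ⊆ Sw := by
    intro k hk
    simp only [Sv, Sw, mem_filter, mem_univ, true_and] at hk ⊢
    rcases lt_trichotomy k i with hki | rfl | hik
    · rwa [← hlow k hki]
    · omega
    · have := hgap k hik hk.1 (by omega)
      omega
  have hi : i ∈ Sw \ Sv := by
    simp only [Sv, Sw, mem_sdiff, mem_filter, mem_univ, true_and]
    omega
  have := card_lt_card ((ssubset_iff_of_subset hsub).mpr ⟨i, mem_sdiff.mp hi⟩)
  have := hdom p (w i + 1)
  omega

lemma apply_lt_of_rankFn_le {v w : Perm (Fin n)} {i : Fin n}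
    (hdom : ∀ p q, rankFn w p q ≤ rankFn v p q) (hlow : ∀ k < i, v k = w k) (hi : v i ≠ w i) :
    v i < w i := by
  have hv := rankFn_succ v i (w i + 1)
  have hw := rankFn_succ w i (w i + 1)
  have hi' := rankFn_congr (p := i) (fun k hk => hlow k hk) (w i + 1)
  have := hdom (i + 1) (w i + 1)
  refine lt_of_le_of_ne ?_ hi
  split_ifs at hv hw <;> omega

lemma exists_first_apply_mem_Ioc {v w : Perm (Fin n)} {i : Fin n} (hlow : ∀ k < i, v k = w k)
    (hi : v i < w i) :
    ∃ j, i < j ∧ v i < v j ∧ v j ≤ w i ∧ ∀ k, i < k → k < j → v i < v k → w i < v k := by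
  have hne : {k | i < k ∧ v i < v k ∧ v k ≤ w i}.Nonempty := by
    refine ⟨v⁻¹ (w i), ?_, by simpa using hi, by simp⟩
    rcases lt_trichotomy (v⁻¹ (w i)) i with h | h | h
    · have := hlow _ h
      simp only [Perm.coe_inv, apply_symm_apply] at this
      exact absurd (w.injective this) h.ne'
    · have := congrArg v h
      simp only [Perm.coe_inv, apply_symm_apply] at this
      exact absurd this hi.ne'
    · exact h
  obtain ⟨j, ⟨hij, hvj, hjw⟩, hmin⟩ := wellFounded_lt.has_min _ hne
  exact ⟨j, hij, hvj, hjw, fun k hik hkj hvk => not_le.mp fun hkw => hmin k ⟨hik, hvk, hkw⟩ hkj⟩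

lemma exists_mul_swap_of_rankFn_le {v w : Perm (Fin n)}
    (hdom : ∀ p q, rankFn w p q ≤ rankFn v p q) (hvw : v ≠ w) :
    ∃ i j : Fin n, i < j ∧ invLen (v * swap i j) = invLen v + 1 ∧
      ∀ p q, rankFn w p q ≤ rankFn (v * swap i j) p q := by
  obtain ⟨i, hi, hlow⟩ := exists_ne_forall_lt_eq (DFunLike.coe_injective.ne hvw)
  have hlt := apply_lt_of_rankFn_le hdom hlow hi
  obtain ⟨j, hij, hvj, hjw, hgap⟩ := exists_first_apply_mem_Ioc hlow hlt
  refine ⟨i, j, hij, ?_, fun p q => ?_⟩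
  · rw [invLen_mul_swap hij hvj, card_eq_zero.mpr (filter_eq_empty_iff.mpr ?_)]
    rintro k - ⟨hik, hkj, hvk, hkj'⟩
    exact (hgap k hik hkj hvk).not_ge (hkj'.le.trans hjw)
  · have hswap := rankFn_mul_swap hij hvj p q
    split_ifs at hswap with hrect
    · have := rankFn_lt_of_forall_lt_eq hdom hlow (fun k hik hkp => hgap k hik (by omega))
        hrect.1 hrect.2.2.1 (by omega)
      omega
    · have := hdom p q
      omega

theorem rankFn_le_of_bruhatLE {v w : Perm (Fin n)} (h : bruhatLE v w) (p q : ℕ) :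
    rankFn w p q ≤ rankFn v p q := by
  induction h with
  | refl => exact le_rfl
  | tail _ hstep ih =>
    obtain ⟨hswap, hlen⟩ := hstep
    obtain ⟨i, j, hij, rfl⟩ := exists_swap_mul_iff.mp hswap
    exact (rankFn_mul_swap_le hij hlen p q).trans ih

theorem bruhatLE_of_rankFn_le {v w : Perm (Fin n)} (hdom : ∀ p q, rankFn w p q ≤ rankFn v p q) :
    bruhatLE v w := by
  by_cases hvw : v = w
  · exact hvw ▸ .refl
  obtain ⟨i, j, hij, hlen, hdom'⟩ := exists_mul_swap_of_rankFn_le hdom hvw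
  have := invLen_le (v * swap i j)
  exact .head ⟨exists_swap_mul_iff.mpr ⟨i, j, hij, rfl⟩, hlen⟩ (bruhatLE_of_rankFn_le hdom')
termination_by n * n - invLen v

/-- Ehresmann's criterion: `v ≤ w` in the Bruhat order iff `r_v(p,q) ≥ r_w(p,q)` for all
`1 ≤ p, q ≤ n`. -/
theorem bruhat_iff_rank_fn {n : ℕ} (v w : Equiv.Perm (Fin n)) :
    bruhatLE v w ↔ ∀ p q : ℕ, p ≤ n → q ≤ n → rankFn w p q ≤ rankFn v p q := by
  refine ⟨fun h p q _ _ => rankFn_le_of_bruhatLE h p q, fun h => bruhatLE_of_rankFn_le ?_⟩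
  intro p q
  rw [rankFn_min w, rankFn_min v]
  exact h _ _ (min_le_right _ _) (min_le_right _ _)
end

section
/- Let Ψ(t) be a solution of the Toda flow Ψ' = -A(ΨΛΨ⁻¹)Ψ on SO(n,ℝ). For a fixed k and fixed columns i₁ < ... < i_k, the minor M(t) of Ψ(t) formed by the first k rows and columns i₁,...,i_k satisfies a linear ODE M'(t) = f(t)M(t) for some continuous function f; consequently if M(0) = 0 then M(t) = 0 for all t. -/
/-!
Since `Ψ` is orthogonal, `L = ΨΛΨᵀ` satisfies `LΨ = ΨΛ`, and `-A(L) = X - L` where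
`X = -A(L) + L` is lower triangular. Hence `Ψ' = XΨ - ΨΛ`, and because `X` is lower triangular
the block `S` of `Ψ` on the first `k` rows and the chosen columns evolves on its own:
`S' = X₁₁ S - S Λ_cols`, with `X₁₁` the leading `k × k` block of `X`. Jacobi's formula
`(det S)' = tr (adj S · S')` turns this into `(det S)' = (tr X₁₁ - tr Λ_cols) det S`, and
`tr X₁₁ = ∑_{a < k} L_aa` is continuous in `t`. Finally, multiplying by the integrating factor
`exp (-∫ f)` shows that a solution of a scalar linear ODE vanishing at one time vanishes
everywhere.
-/

open Matrix

namespace Matrix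

variable {ι : Type*} [Fintype ι] [DecidableEq ι]

theorem trace_adjugate_mul {R : Type*} [CommRing R] (A B : Matrix ι ι R) :
    (adjugate A * B).trace = ∑ j, (A.updateCol j fun i => B i j).det := by
  simp only [← cramer_apply, cramer_eq_adjugate_mulVec, trace, diag, mul_apply, mulVec,
    dotProduct]

theorem det_updateCol_eq_sum_perm {R : Type*} [CommRing R] (A : Matrix ι ι R) (j : ι)
    (b : ι → R) :
    (A.updateCol j b).det =
      ∑ σ : Equiv.Perm ι, (σ.sign : R) * ((∏ i ∈ Finset.univ.erase j, A (σ i) i) * b (σ j)) := by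
  rw [det_apply']
  refine Finset.sum_congr rfl fun σ _ => congrArg _ ?_
  rw [← Finset.prod_erase_mul _ _ (Finset.mem_univ j), updateCol_self]
  congr 1
  exact Finset.prod_congr rfl fun i hi => updateCol_ne (Finset.ne_of_mem_erase hi)

variable {𝕜 𝔸 : Type*} [NontriviallyNormedField 𝕜] [NormedCommRing 𝔸] [NormedAlgebra 𝕜 𝔸]

theorem hasDerivAt_det {S : 𝕜 → Matrix ι ι 𝔸} {S' : Matrix ι ι 𝔸} {t : 𝕜}
    (h : ∀ i j, HasDerivAt (fun s => S s i j) (S' i j) t) :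
    HasDerivAt (fun s => (S s).det) (adjugate (S t) * S').trace t := by
  simp_rw [trace_adjugate_mul, det_updateCol_eq_sum_perm, det_apply']
  rw [Finset.sum_comm]
  refine HasDerivAt.fun_sum fun σ _ => ?_
  rw [← Finset.mul_sum]
  refine HasDerivAt.const_mul _ ?_
  simpa only [smul_eq_mul] using HasDerivAt.fun_finsetProd fun i _ => h (σ i) i

theorem trace_adjugate_mul_sub_mul {R : Type*} [CommRing R] (A T D : Matrix ι ι R) :
    (adjugate A * (T * A - A * D)).trace = (T.trace - D.trace) * A.det := by
  rw [mul_sub, trace_sub, ← Matrix.mul_assoc, trace_mul_comm, ← Matrix.mul_assoc, mul_adjugate,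
    ← Matrix.mul_assoc, adjugate_mul]
  simp only [smul_mul, Matrix.one_mul, trace_smul, smul_eq_mul]
  ring

theorem hasDerivAt_det_of_hasDerivAt_mul_sub_mul {S : 𝕜 → Matrix ι ι 𝔸} {T D : Matrix ι ι 𝔸}
    {t : 𝕜} (h : ∀ i j, HasDerivAt (fun s => S s i j) ((T * S t - S t * D) i j) t) :
    HasDerivAt (fun s => (S s).det) ((T.trace - D.trace) * (S t).det) t :=
  trace_adjugate_mul_sub_mul (S t) T D ▸ hasDerivAt_det h

theorem submatrix_castLE_mul_of_lower {R m l : Type*} [NonUnitalNonAssocSemiring R] [Fintype m]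
    {n k : ℕ} (hk : k ≤ n) {X : Matrix (Fin n) (Fin n) R} (hX : ∀ i j, i < j → X i j = 0)
    (Y : Matrix (Fin n) m R) (c : l → m) :
    (X * Y).submatrix (Fin.castLE hk) c =
      X.submatrix (Fin.castLE hk) (Fin.castLE hk) * Y.submatrix (Fin.castLE hk) c := by
  ext a b
  simp only [submatrix_apply, mul_apply]
  refine ((Finset.sum_subset (Finset.subset_univ _) fun j _ hj => ?_).symm).trans
    (Finset.sum_map Finset.univ (Fin.castLEEmb hk) _)
  have : Fin.castLE hk a < j := by
    by_contra! hle
    exact hj (Finset.mem_map.2 ⟨⟨j, lt_of_le_of_lt hle a.isLt⟩, Finset.mem_univ _, rfl⟩)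
  rw [hX _ _ this, zero_mul]

theorem submatrix_mul_diagonal {R l m p o : Type*} [NonUnitalNonAssocSemiring R] [Fintype m]
    [DecidableEq m] [Fintype o] [DecidableEq o] (Y : Matrix l m R) (d : m → R) (r : p → l)
    (c : o → m) :
    (Y * diagonal d).submatrix r c = Y.submatrix r c * diagonal (d ∘ c) := by
  ext a b
  simp [mul_diagonal]

end Matrix

theorem eq_zero_of_hasDerivAt_eq_mul {f g : ℝ → ℝ} (hf : Continuous f)
    (hg : ∀ t, HasDerivAt g (f t * g t) t) {a : ℝ} (ha : g a = 0) (t : ℝ) : g t = 0 := by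
  set F : ℝ → ℝ := fun u => ∫ s in a..u, f s
  have hF : ∀ u, HasDerivAt F (f u) u := fun u =>
    intervalIntegral.integral_hasDerivAt_right (hf.intervalIntegrable _ _)
      (hf.stronglyMeasurableAtFilter _ _) hf.continuousAt
  have hconst : ∀ u, HasDerivAt (fun v => g v * Real.exp (-F v)) 0 u := fun u =>
    ((hg u).mul (hF u).neg.exp).congr_deriv (by ring)
  have := is_const_of_deriv_eq_zero (fun v => (hconst v).differentiableAt)
    (fun v => (hconst v).deriv) t a
  simpa [ha, Real.exp_ne_zero] using this

theorem neg_antisymmetrize_add_self_apply_of_lt {n : ℕ} (L : Matrix (Fin n) (Fin n) ℝ)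
    {i j : Fin n} (hij : i < j) : (-antisymmetrize L + L) i j = 0 := by
  simp [antisymmetrize, hij]

theorem trace_submatrix_neg_antisymmetrize_add_self {n : ℕ} {m : Type*} [Fintype m]
    (L : Matrix (Fin n) (Fin n) ℝ) (e : m → Fin n) :
    ((-antisymmetrize L + L).submatrix e e).trace = (L.submatrix e e).trace := by
  simp [trace, antisymmetrize]

theorem submatrix_neg_antisymmetrize_mul {n k : ℕ} (hk : k ≤ n) {m : Type*} [Fintype m]
    [DecidableEq m] {L P : Matrix (Fin n) (Fin n) ℝ} {lam : Fin n → ℝ}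
    (hLP : L * P = P * diagonal lam) (cols : m → Fin n) :
    (-antisymmetrize L * P).submatrix (Fin.castLE hk) cols =
      (-antisymmetrize L + L).submatrix (Fin.castLE hk) (Fin.castLE hk) *
          P.submatrix (Fin.castLE hk) cols -
        P.submatrix (Fin.castLE hk) cols * diagonal (lam ∘ cols) := by
  rw [← submatrix_castLE_mul_of_lower hk (fun _ _ => neg_antisymmetrize_add_self_apply_of_lt L),
    ← submatrix_mul_diagonal, ← hLP, add_mul]
  ext
  simp

theorem toda_minor_evolution_general {n : ℕ} (lam : Fin n → ℝ)
    (Ψ : ℝ → Matrix (Fin n) (Fin n) ℝ)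
    (horth : ∀ t, Ψ t * (Ψ t)ᵀ = 1)
    (hΨ : ∀ t i j, HasDerivAt (fun s => Ψ s i j)
      ((-(antisymmetrize (Ψ t * Matrix.diagonal lam * (Ψ t)ᵀ)) * Ψ t) i j) t)
    (k : ℕ) (hk : k ≤ n) (cols : Fin k → Fin n) :
    ∃ f : ℝ → ℝ, Continuous f ∧
      (∀ t, HasDerivAt
        (fun s => ((Ψ s).submatrix (fun a : Fin k => Fin.castLE hk a) cols).det)
        (f t * ((Ψ t).submatrix (fun a : Fin k => Fin.castLE hk a) cols).det) t) ∧
      (((Ψ 0).submatrix (fun a : Fin k => Fin.castLE hk a) cols).det = 0 →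
        ∀ t, ((Ψ t).submatrix (fun a : Fin k => Fin.castLE hk a) cols).det = 0) := by
  set L : ℝ → Matrix (Fin n) (Fin n) ℝ := fun s => Ψ s * diagonal lam * (Ψ s)ᵀ
  have hLΨ (t : ℝ) : L t * Ψ t = Ψ t * diagonal lam := by
    simp only [L, Matrix.mul_assoc, mul_eq_one_comm.mp (horth t), Matrix.mul_one]
  have hΨc : Continuous Ψ := continuous_matrix fun i j =>
    continuous_iff_continuousAt.2 fun t => (hΨ t i j).continuousAt
  set f : ℝ → ℝ := fun s => ((L s).submatrix (Fin.castLE hk) (Fin.castLE hk)).trace -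
    (diagonal (lam ∘ cols)).trace
  have hf : Continuous f := by fun_prop
  have hode (t : ℝ) : HasDerivAt (fun s => ((Ψ s).submatrix (Fin.castLE hk) cols).det)
      (f t * ((Ψ t).submatrix (Fin.castLE hk) cols).det) t := by
    simpa only [trace_submatrix_neg_antisymmetrize_add_self] using
      hasDerivAt_det_of_hasDerivAt_mul_sub_mul
        (T := (-antisymmetrize (L t) + L t).submatrix (Fin.castLE hk) (Fin.castLE hk))
        fun a b => by
          rw [← submatrix_neg_antisymmetrize_mul hk (hLΨ t)]
          exact hΨ t _ _
  exact ⟨f, hf, hode, fun h0 => eq_zero_of_hasDerivAt_eq_mul hf hode h0⟩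

/-- For a solution of the Toda flow `Ψ' = -A(ΨΛΨ⁻¹)Ψ` on `SO(n,ℝ)`, the minor of `Ψ`
on the first `k` rows and columns `i₁ < … < i_k` satisfies a linear ODE `M' = f·M`; in
particular its zero set is invariant: if `M(0) = 0` then `M(t) = 0` for all `t`. -/
theorem toda_minor_evolution {n : ℕ} (lam : Fin n → ℝ)
    (Ψ : ℝ → Matrix (Fin n) (Fin n) ℝ)
    (horth : ∀ t, Ψ t * (Ψ t)ᵀ = 1)
    (hΨ : ∀ t i j, HasDerivAt (fun s => Ψ s i j)
      ((-(antisymmetrize (Ψ t * Matrix.diagonal lam * (Ψ t)ᵀ)) * Ψ t) i j) t)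
    (k : ℕ) (hk : k ≤ n) (cols : Fin k → Fin n) (hcols : StrictMono cols) :
    ∃ f : ℝ → ℝ, Continuous f ∧
      (∀ t, HasDerivAt
        (fun s => ((Ψ s).submatrix (fun a : Fin k => Fin.castLE hk a) cols).det)
        (f t * ((Ψ t).submatrix (fun a : Fin k => Fin.castLE hk a) cols).det) t) ∧
      (((Ψ 0).submatrix (fun a : Fin k => Fin.castLE hk a) cols).det = 0 →
        ∀ t, ((Ψ t).submatrix (fun a : Fin k => Fin.castLE hk a) cols).det = 0) :=
  toda_minor_evolution_general lam Ψ horth hΨ k hk cols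
end

section
/- With the inner product ⟨A,B⟩_J = -Tr(A J⁻¹(B)) on so(n), where J acts on an antisymmetric matrix by dividing its k-th off-diagonals by k, the vector field Ψ ↦ -A(ΨΛΨ⁻¹)Ψ on SO(n,ℝ) is the gradient of the function F(Ψ) = Tr(ΨΛΨ⁻¹N) with N = diag(0,1,...,n-1); equivalently, the first-order variation of F at Ψ₀ in direction ΘΨ₀ (Θ ∈ so(n)) equals Tr(Θ[Ψ₀ΛΨ₀⁻¹, N]) = -⟨Θ, J([Ψ₀ΛΨ₀⁻¹, N])⟩_J, and J([L,N]) = A(L) for every symmetric L. -/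
open Matrix

/-- The operator `J`, dividing the `k`-th off-diagonals by `k`. -/
noncomputable def Jop {n : ℕ} (M : Matrix (Fin n) (Fin n) ℝ) : Matrix (Fin n) (Fin n) ℝ :=
  Matrix.of fun i j => if i = j then 0 else M i j / |(i : ℝ) - (j : ℝ)|

/-- The inverse operator `J⁻¹`, multiplying the `k`-th off-diagonals by `k`. -/
noncomputable def Jinv {n : ℕ} (M : Matrix (Fin n) (Fin n) ℝ) : Matrix (Fin n) (Fin n) ℝ :=
  Matrix.of fun i j => |(i : ℝ) - (j : ℝ)| * M i j

/-- The inner product `⟨A,B⟩_J = -Tr(A · J⁻¹(B))` on `so(n)`. -/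
noncomputable def innerJ {n : ℕ} (A B : Matrix (Fin n) (Fin n) ℝ) : ℝ :=
  -Matrix.trace (A * Jinv B)

/-!
Along the curve `t ↦ (1 + tΘ)Ψ₀` we have `((1 + tΘ)Ψ₀)⁻¹ = Ψ₀ᵀ(1 + tΘ)⁻¹`, so `F` becomes
`Tr((1 + tΘ) L (1 + tΘ)⁻¹ N)` with `L = Ψ₀ΛΨ₀ᵀ`. The inverse has derivative `-Θ` at `t = 0`, so the
variation is `Tr([Θ, L] N) = Tr(Θ [L, N])` by cyclicity of the trace. Since `N` is diagonal,
`[L, N]ᵢⱼ = (j - i) Lᵢⱼ`: the commutator vanishes on the diagonal, where `J⁻¹ ∘ J` fails to be the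
identity, and dividing by `|i - j|` leaves `sign(j - i) Lᵢⱼ`, which is `A(L)`.
-/

section RingInverse

variable {𝕜 R : Type*} [NontriviallyNormedField 𝕜] [NormedRing R] [NormedAlgebra 𝕜 R]

theorem hasDerivAt_one_add_smul (X : R) (t : 𝕜) : HasDerivAt (fun s : 𝕜 => 1 + s • X) X t := by
  simpa using ((hasDerivAt_id t).smul_const X).const_add 1

theorem hasDerivAt_ringInverse_one_add_smul [HasSummableGeomSeries R] (X : R) :
    HasDerivAt (fun t : 𝕜 => Ring.inverse (1 + t • X)) (-X) 0 := by
  have hinv : HasFDerivAt Ring.inverse (-ContinuousLinearMap.mulLeftRight 𝕜 R 1 1) (1 : R) := by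
    simpa only [inv_one, Units.val_one] using hasFDerivAt_ringInverse (𝕜 := 𝕜) (1 : Rˣ)
  have := hinv.comp_hasDerivAt_of_eq 0 (hasDerivAt_one_add_smul X 0) (by simp)
  simp only [_root_.neg_apply, ContinuousLinearMap.mulLeftRight_apply, one_mul, mul_one] at this
  exact this

theorem hasDerivAt_conj_one_add_smul [HasSummableGeomSeries R] (X C : R) :
    HasDerivAt (fun t : 𝕜 => (1 + t • X) * C * Ring.inverse (1 + t • X)) (X * C - C * X) 0 := by
  have := ((hasDerivAt_one_add_smul X 0).mul_const C).mul
    (hasDerivAt_ringInverse_one_add_smul (𝕜 := 𝕜) X)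
  simp only [zero_smul, add_zero, one_mul, Ring.inverse_one, mul_one, mul_neg,
    ← sub_eq_add_neg] at this
  exact this

end RingInverse

namespace Matrix

variable {m : Type*} [Fintype m]

theorem trace_commutator_mul {α : Type*} [CommRing α] (X C N : Matrix m m α) :
    trace ((X * C - C * X) * N) = trace (X * (C * N - N * C)) := by
  simp only [sub_mul, mul_sub, trace_sub, Matrix.mul_assoc]
  rw [trace_mul_comm C (X * N), Matrix.mul_assoc]

theorem hasDerivAt_trace_conj_one_add_smul [DecidableEq m] (X C N : Matrix m m ℝ) :
    HasDerivAt (fun t : ℝ => trace ((1 + t • X) * C * (1 + t • X)⁻¹ * N))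
      (trace (X * (C * N - N * C))) 0 := by
  -- any algebra norm on matrices will do: only its topology enters the statement
  let := Matrix.linftyOpNormedRing (n := m) (α := ℝ)
  let := Matrix.linftyOpNormedAlgebra (n := m) (R := ℝ) (α := ℝ)
  have : CompleteSpace (Matrix m m ℝ) := FiniteDimensional.complete ℝ _
  simp only [nonsing_inv_eq_ringInverse, ← trace_commutator_mul]
  exact (traceLinearMap m ℝ ℝ).toContinuousLinearMap.hasFDerivAt.comp_hasDerivAt 0
    ((hasDerivAt_conj_one_add_smul X C).mul_const N)

theorem commutator_diagonal_apply [DecidableEq m] {α : Type*} [CommRing α] (L : Matrix m m α)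
    (d : m → α) (i j : m) : (L * diagonal d - diagonal d * L) i j = (d j - d i) * L i j := by
  simp only [sub_apply, mul_diagonal, diagonal_mul]
  ring

end Matrix

theorem Jinv_Jop_of_diag_eq_zero {n : ℕ} {M : Matrix (Fin n) (Fin n) ℝ} (hM : ∀ i, M i i = 0) :
    Jinv (Jop M) = M := by
  ext i j
  rcases eq_or_ne i j with rfl | hij
  · simp [Jinv, Jop, hM]
  · have hk : |(i : ℝ) - (j : ℝ)| ≠ 0 := by
      rw [abs_ne_zero, sub_ne_zero, Ne, Nat.cast_inj, Fin.val_inj]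
      exact hij
    simp only [Jinv, Jop, of_apply, if_neg hij]
    field_simp

theorem Jop_commutator_diagonal {n : ℕ} (L : Matrix (Fin n) (Fin n) ℝ) :
    Jop (L * diagonal (fun i : Fin n => (i : ℝ)) - diagonal (fun i : Fin n => (i : ℝ)) * L)
      = antisymmetrize L := by
  ext i j
  simp only [Jop, antisymmetrize, of_apply, commutator_diagonal_apply]
  rcases lt_trichotomy i j with hij | rfl | hji
  · have hk : (i : ℝ) < j := by exact_mod_cast hij
    rw [if_neg hij.ne, if_pos hij, abs_of_neg (sub_neg.mpr hk), neg_sub]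
    field_simp [(sub_pos.mpr hk).ne']
  · simp
  · have hk : (j : ℝ) < i := by exact_mod_cast hji
    rw [if_neg hji.ne', if_neg hji.not_gt, if_pos hji, abs_of_pos (sub_pos.mpr hk)]
    field_simp [(sub_pos.mpr hk).ne']
    ring

theorem toda_is_gradient_flow_general {n : ℕ} (Lam : Matrix (Fin n) (Fin n) ℝ)
    (Ψ₀ : Matrix (Fin n) (Fin n) ℝ) (horth : Ψ₀ * Ψ₀ᵀ = 1)
    (Θ : Matrix (Fin n) (Fin n) ℝ)
    (Nmat : Matrix (Fin n) (Fin n) ℝ) (hN : Nmat = Matrix.diagonal fun i : Fin n => (i : ℝ)) :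
    HasDerivAt
      (fun t : ℝ => Matrix.trace
        ((((1 : Matrix (Fin n) (Fin n) ℝ) + t • Θ) * Ψ₀) * Lam
          * ((((1 : Matrix (Fin n) (Fin n) ℝ) + t • Θ) * Ψ₀))⁻¹ * Nmat))
      (Matrix.trace (Θ * ((Ψ₀ * Lam * Ψ₀ᵀ) * Nmat - Nmat * (Ψ₀ * Lam * Ψ₀ᵀ)))) 0 ∧
    Matrix.trace (Θ * ((Ψ₀ * Lam * Ψ₀ᵀ) * Nmat - Nmat * (Ψ₀ * Lam * Ψ₀ᵀ)))
      = -innerJ Θ (Jop ((Ψ₀ * Lam * Ψ₀ᵀ) * Nmat - Nmat * (Ψ₀ * Lam * Ψ₀ᵀ))) ∧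
    (∀ L : Matrix (Fin n) (Fin n) ℝ, Lᵀ = L →
      Jop (L * Nmat - Nmat * L) = antisymmetrize L) := by
  subst hN
  refine ⟨?_, ?_, fun L _ => Jop_commutator_diagonal L⟩
  · have hconj : ∀ t : ℝ, ((1 + t • Θ) * Ψ₀) * Lam * ((1 + t • Θ) * Ψ₀)⁻¹
        = (1 + t • Θ) * (Ψ₀ * Lam * Ψ₀ᵀ) * (1 + t • Θ)⁻¹ := fun t => by
      rw [Matrix.mul_inv_rev, inv_eq_right_inv horth]
      simp only [Matrix.mul_assoc]
    simp only [hconj]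
    exact hasDerivAt_trace_conj_one_add_smul Θ _ _
  · rw [innerJ, Jinv_Jop_of_diag_eq_zero fun i => by
    rw [commutator_diagonal_apply, sub_self, zero_mul], neg_neg]

/-- With the metric `⟨·,·⟩_J` on `so(n)`, the Toda vector field `Ψ ↦ -A(ΨΛΨ⁻¹)Ψ` is the
gradient of `F(Ψ) = Tr(ΨΛΨ⁻¹N)`, `N = diag(0,1,…,n-1)`: the first-order variation of `F`
at `Ψ₀` in the direction `ΘΨ₀` equals `Tr(Θ[Ψ₀ΛΨ₀⁻¹, N]) = -⟨Θ, J([Ψ₀ΛΨ₀⁻¹, N])⟩_J`, and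
`J([L, N]) = A(L)` for every symmetric `L`. -/
theorem toda_is_gradient_flow {n : ℕ} (Lam : Matrix (Fin n) (Fin n) ℝ) (hLam : Lam.IsDiag)
    (Ψ₀ : Matrix (Fin n) (Fin n) ℝ) (horth : Ψ₀ * Ψ₀ᵀ = 1)
    (Θ : Matrix (Fin n) (Fin n) ℝ) (hΘ : Θᵀ = -Θ)
    (Nmat : Matrix (Fin n) (Fin n) ℝ) (hN : Nmat = Matrix.diagonal fun i : Fin n => (i : ℝ)) :
    HasDerivAt
      (fun t : ℝ => Matrix.trace
        ((((1 : Matrix (Fin n) (Fin n) ℝ) + t • Θ) * Ψ₀) * Lam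
          * ((((1 : Matrix (Fin n) (Fin n) ℝ) + t • Θ) * Ψ₀))⁻¹ * Nmat))
      (Matrix.trace (Θ * ((Ψ₀ * Lam * Ψ₀ᵀ) * Nmat - Nmat * (Ψ₀ * Lam * Ψ₀ᵀ)))) 0 ∧
    Matrix.trace (Θ * ((Ψ₀ * Lam * Ψ₀ᵀ) * Nmat - Nmat * (Ψ₀ * Lam * Ψ₀ᵀ)))
      = -innerJ Θ (Jop ((Ψ₀ * Lam * Ψ₀ᵀ) * Nmat - Nmat * (Ψ₀ * Lam * Ψ₀ᵀ))) ∧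
    (∀ L : Matrix (Fin n) (Fin n) ℝ, Lᵀ = L →
      Jop (L * Nmat - Nmat * L) = antisymmetrize L) :=
  toda_is_gradient_flow_general Lam Ψ₀ horth Θ Nmat hN
end
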